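/- Assume σA² > 0, σrec² > 0 and 0 < σcov² ≤ 4σrec². Then s is strictly decreasing on the open interval (0,1), i.e., for all 0 < ρ₁ < ρ₂ < 1 one has s(ρ₂) < s(ρ₁). (Consequently the infimum of s on (0,1) is attained in the limit ρ → 1, corresponding to the optimal splitting ratio ρ* = 1 in Proposition 2.) -/

import Mathlib

/-- The ρ-dependent factor `s(ρ)` of the high-SNR mutual information,
with `a`, `c`, `r` standing for σA², σcov², σrec². -/
noncomputable def s (a c r : ℝ) (ρ : ℝ) : ℝ :=
  (c / ρ + a) *
    (a + ((c / ρ) * (2 * r / (1 - ρ))) / ((c / ρ) + (2 * r / (1 - ρ))))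

/-!
The parallel combination of `c/ρ` and `2r/(1-ρ)` is `2rc/(c + (2r-c)ρ)`, so expanding the product
gives `s(ρ) = a² + ac·(1/ρ + 2r/(c + (2r-c)ρ)) + 2rc²/(ρ(c + (2r-c)ρ))`. Both ρ-dependent terms
decrease on `(0,1)` once `c ≤ 4r`: the denominator `ρ(c + (2r-c)ρ)` increases, and the divided
difference of `1/ρ + 2r/(c + (2r-c)ρ)` has a numerator that is a sum of nonnegative terms in
`c`, `4r - c`, `2 - p - q` and `p + q - pq`.
-/

open Set

section

variable {c r : ℝ}

lemma linear_pos (hc : 0 < c) (hr : 0 ≤ r) {ρ : ℝ} (hρ : ρ ∈ Ioo (0 : ℝ) 1) :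
    0 < c + (2 * r - c) * ρ := by
  obtain ⟨h0, h1⟩ := hρ
  nlinarith

lemma s_eq_expand (a : ℝ) (hc : 0 < c) (hr : 0 < r) {ρ : ℝ} (hρ : ρ ∈ Ioo (0 : ℝ) 1) :
    s a c r ρ = a ^ 2 + a * c * (ρ⁻¹ + 2 * r / (c + (2 * r - c) * ρ)) +
      2 * r * c ^ 2 / (ρ * (c + (2 * r - c) * ρ)) := by
  have hD := linear_pos hc hr.le hρ
  obtain ⟨h0, h1⟩ := hρ
  have h1' : 0 < 1 - ρ := by linarith
  have hsum : 0 < c / ρ + 2 * r / (1 - ρ) := by positivity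
  have hparallel : c / ρ * (2 * r / (1 - ρ)) / (c / ρ + 2 * r / (1 - ρ)) =
      2 * r * c / (c + (2 * r - c) * ρ) := by
    rw [div_eq_div_iff hsum.ne' hD.ne']
    field_simp
    ring
  rw [s, hparallel]
  field_simp
  ring

lemma linear_mul_linear_add_pos (hc : 0 < c) (h4 : c ≤ 4 * r) {p q : ℝ}
    (hp : p ∈ Ioo (0 : ℝ) 1) (hq : q ∈ Ioo (0 : ℝ) 1) :
    0 < (c + (2 * r - c) * p) * (c + (2 * r - c) * q) + 2 * r * (2 * r - c) * (p * q) := by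
  obtain ⟨hp0, hp1⟩ := hp
  obtain ⟨hq0, hq1⟩ := hq
  have key : 2 * ((c + (2 * r - c) * p) * (c + (2 * r - c) * q) + 2 * r * (2 * r - c) * (p * q)) =
      c ^ 2 * (2 - p - q) + c * (4 * r - c) * (p + q * (1 - p)) + p * q * (4 * r - c) ^ 2 := by
    ring
  have h₁ : 0 < c ^ 2 * (2 - p - q) := mul_pos (pow_pos hc 2) (by linarith)
  have h₂ : 0 ≤ c * (4 * r - c) * (p + q * (1 - p)) := by
    have : 0 ≤ p + q * (1 - p) := by nlinarith
    have : 0 ≤ 4 * r - c := by linarith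
    positivity
  have h₃ : 0 ≤ p * q * (4 * r - c) ^ 2 := by positivity
  linarith

lemma strictAntiOn_inv_add_div (hc : 0 < c) (h4 : c ≤ 4 * r) :
    StrictAntiOn (fun ρ : ℝ => ρ⁻¹ + 2 * r / (c + (2 * r - c) * ρ)) (Ioo 0 1) := by
  intro p hp q hq hpq
  have hr : 0 ≤ r := by linarith
  have hDp := linear_pos hc hr hp
  have hDq := linear_pos hc hr hq
  have hnum := linear_mul_linear_add_pos hc h4 hp hq
  have hdiff : (p⁻¹ + 2 * r / (c + (2 * r - c) * p)) - (q⁻¹ + 2 * r / (c + (2 * r - c) * q)) =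
      (q - p) * ((c + (2 * r - c) * p) * (c + (2 * r - c) * q) + 2 * r * (2 * r - c) * (p * q)) /
        (p * q * ((c + (2 * r - c) * p) * (c + (2 * r - c) * q))) := by
    have := hp.1.ne'
    have := hq.1.ne'
    -- hide the denominators so that `field_simp` can use `hDp`, `hDq` instead of renormalizing them
    generalize hDp' : c + (2 * r - c) * p = Dp at hDp ⊢
    generalize hDq' : c + (2 * r - c) * q = Dq at hDq ⊢
    field_simp
    rw [← hDp', ← hDq']
    ring
  have hpos : 0 < (p⁻¹ + 2 * r / (c + (2 * r - c) * p)) - (q⁻¹ + 2 * r / (c + (2 * r - c) * q)) := by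
    have : 0 < q - p := sub_pos.2 hpq
    have := hp.1
    have := hq.1
    rw [hdiff]
    positivity
  exact sub_pos.1 hpos

lemma strictMonoOn_mul_linear (hc : 0 < c) (h4 : c ≤ 4 * r) :
    StrictMonoOn (fun ρ : ℝ => ρ * (c + (2 * r - c) * ρ)) (Ioo 0 1) := by
  rintro p ⟨hp0, -⟩ q ⟨-, hq1⟩ hpq
  have hslope : 0 < c + (2 * r - c) * (p + q) := by
    nlinarith [mul_nonneg (show (0 : ℝ) ≤ 4 * r - c by linarith) (show (0 : ℝ) ≤ p + q by linarith)]
  have : q * (c + (2 * r - c) * q) - p * (c + (2 * r - c) * p) =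
      (q - p) * (c + (2 * r - c) * (p + q)) := by ring
  nlinarith [mul_pos (sub_pos.2 hpq) hslope]

end

/-- if σA² > 0, σrec² > 0 and 0 < σcov² ≤ 4σrec², then s is strictly
decreasing on (0,1). -/
theorem stmt_6 (a c r : ℝ) (ha : 0 < a) (hr : 0 < r) (hc : 0 < c)
    (h4 : c ≤ 4 * r) :
    ∀ ρ₁ ρ₂ : ℝ, 0 < ρ₁ → ρ₁ < ρ₂ → ρ₂ < 1 → s a c r ρ₂ < s a c r ρ₁ := by
  intro p q hp hpq hq
  have hp' : p ∈ Ioo (0 : ℝ) 1 := ⟨hp, hpq.trans hq⟩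
  have hq' : q ∈ Ioo (0 : ℝ) 1 := ⟨hp.trans hpq, hq⟩
  rw [s_eq_expand a hc hr hp', s_eq_expand a hc hr hq']
  have hfirst := mul_lt_mul_of_pos_left (strictAntiOn_inv_add_div hc h4 hp' hq' hpq) (mul_pos ha hc)
  have hsecond : 2 * r * c ^ 2 / (q * (c + (2 * r - c) * q)) <
      2 * r * c ^ 2 / (p * (c + (2 * r - c) * p)) :=
    div_lt_div_of_pos_left (by positivity) (mul_pos hp (linear_pos hc hr.le hp'))
      (strictMonoOn_mul_linear hc h4 hp' hq' hpq)
  linarith
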